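/- Weak bilateral semantic harmony: for every base B, every formula χ, and each sign * ∈ {+,−}: ⊩*_B χ if and only if ⊩*ᴰ_{(B)^D} (χ)^D, where (+)^D = − and (−)^D = +. -/

import Mathlib

/-- Signs: `pos` for proof/assertion, `neg` for refutation/rejection. -/
inductive Sign where
  | pos
  | neg
deriving DecidableEq

/-- The dual of a sign. -/
def Sign.dual : Sign → Sign
  | .pos => .neg
  | .neg => .pos

/-- Formulas of the bilateral logic 2Int. -/
inductive Form where
  | atom : ℕ → Form
  | bot : Form
  | top : Form
  | and : Form → Form → Form
  | or : Form → Form → Form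
  | imp : Form → Form → Form
  | coimp : Form → Form → Form
deriving DecidableEq

/-- A premise of an atomic rule: the sign required (proof or refutation), the premise atom,
and the sets of dischargeable atomic proof assumptions and refutation assumptions. -/
structure Premise where
  sign : Sign
  concl : ℕ
  dischargePf : Set ℕ
  dischargeRf : Set ℕ

/-- An atomic rule: a list of premises, a marking as proof (`pos`) or refutation (`neg`) rule,
and an atomic conclusion. -/
structure AtomicRule where
  prems : List Premise
  sign : Sign
  concl : ℕ

/-- A bilateral atomic system (base) is a set of atomic rules. -/
abbrev Base := Set AtomicRule

/-- `AtDeriv B s Γ Δ p` formalizes `Γ;Δ ⊢^s_B p`: there is a deduction in `B` of the atom `p`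
whose open atomic proof assumptions are contained in `Γ` and open atomic refutation
assumptions in `Δ`, consisting of a single assumption of sign `s` or ending with a rule of
sign `s`. -/
inductive AtDeriv (B : Base) : Sign → Set ℕ → Set ℕ → ℕ → Prop
  | hypPos {Γ Δ : Set ℕ} {p : ℕ} : p ∈ Γ → AtDeriv B .pos Γ Δ p
  | hypNeg {Γ Δ : Set ℕ} {p : ℕ} : p ∈ Δ → AtDeriv B .neg Γ Δ p
  | app {Γ Δ : Set ℕ} {R : AtomicRule} (hR : R ∈ B)
      (h : ∀ pr ∈ R.prems,
        AtDeriv B pr.sign (Γ ∪ pr.dischargePf) (Δ ∪ pr.dischargeRf) pr.concl) :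
      AtDeriv B R.sign Γ Δ R.concl

/-- Bilateral validity (support) `⊩^s_B φ`, by recursion on the formula. -/
def Supp : Form → Base → Sign → Prop
  | .atom p, B, s => AtDeriv B s ∅ ∅ p
  | .bot, B, .pos => ∀ p : ℕ, AtDeriv B .pos ∅ ∅ p ∧ AtDeriv B .neg ∅ ∅ p
  | .bot, _, .neg => True
  | .top, _, .pos => True
  | .top, B, .neg => ∀ p : ℕ, AtDeriv B .pos ∅ ∅ p ∧ AtDeriv B .neg ∅ ∅ p
  | .and φ ψ, B, .pos => Supp φ B .pos ∧ Supp ψ B .pos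
  | .and φ ψ, B, .neg => ∀ C : Base, B ⊆ C → ∀ p : ℕ,
      (((∀ D : Base, C ⊆ D → Supp φ D .neg → AtDeriv D .pos ∅ ∅ p) ∧
        (∀ D : Base, C ⊆ D → Supp ψ D .neg → AtDeriv D .pos ∅ ∅ p)) →
        AtDeriv C .pos ∅ ∅ p) ∧
      (((∀ D : Base, C ⊆ D → Supp φ D .neg → AtDeriv D .neg ∅ ∅ p) ∧
        (∀ D : Base, C ⊆ D → Supp ψ D .neg → AtDeriv D .neg ∅ ∅ p)) →
        AtDeriv C .neg ∅ ∅ p)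
  | .or φ ψ, B, .pos => ∀ C : Base, B ⊆ C → ∀ p : ℕ,
      (((∀ D : Base, C ⊆ D → Supp φ D .pos → AtDeriv D .pos ∅ ∅ p) ∧
        (∀ D : Base, C ⊆ D → Supp ψ D .pos → AtDeriv D .pos ∅ ∅ p)) →
        AtDeriv C .pos ∅ ∅ p) ∧
      (((∀ D : Base, C ⊆ D → Supp φ D .pos → AtDeriv D .neg ∅ ∅ p) ∧
        (∀ D : Base, C ⊆ D → Supp ψ D .pos → AtDeriv D .neg ∅ ∅ p)) →
        AtDeriv C .neg ∅ ∅ p)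
  | .or φ ψ, B, .neg => Supp φ B .neg ∧ Supp ψ B .neg
  | .imp φ ψ, B, .pos => ∀ C : Base, B ⊆ C → Supp φ C .pos → Supp ψ C .pos
  | .imp φ ψ, B, .neg => Supp φ B .pos ∧ Supp ψ B .neg
  | .coimp φ ψ, B, .pos => Supp φ B .pos ∧ Supp ψ B .neg
  | .coimp φ ψ, B, .neg => ∀ C : Base, B ⊆ C → Supp ψ C .neg → Supp φ C .neg

/-- Dual of a premise. -/
def Premise.dual (pr : Premise) : Premise :=
  ⟨pr.sign.dual, pr.concl, pr.dischargeRf, pr.dischargePf⟩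

/-- Dual of an atomic rule. -/
def AtomicRule.dual (R : AtomicRule) : AtomicRule :=
  ⟨R.prems.map Premise.dual, R.sign.dual, R.concl⟩

/-- Dual of a base. -/
def Base.dual (B : Base) : Base := AtomicRule.dual '' B

/-- Dual of a formula. -/
def Form.dual : Form → Form
  | .atom p => .atom p
  | .bot => .top
  | .top => .bot
  | .and φ ψ => (φ.dual).or (ψ.dual)
  | .or φ ψ => (φ.dual).and (ψ.dual)
  | .imp φ ψ => (ψ.dual).coimp (φ.dual)
  | .coimp φ ψ => (ψ.dual).imp (φ.dual)

/-!
Dualising a base swaps proof and refutation rules, so every deduction in `B` becomes a deduction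
in `B.dual` of the dual sign with the two assumption sets exchanged. Since dualisation of bases is
an involution preserving `⊆`, the extensions of `B.dual` are exactly the duals of the extensions
of `B`. The theorem then follows by induction on `χ`: each clause of `⊩` for a connective is
carried by these two facts onto the clause for its dual connective with the opposite sign.
-/

@[simp] lemma Sign.dual_dual (s : Sign) : s.dual.dual = s := by
  cases s <;> rfl

@[simp] lemma Premise.dual_dual (pr : Premise) : pr.dual.dual = pr := by
  simp [Premise.dual]

@[simp] lemma AtomicRule.dual_dual (R : AtomicRule) : R.dual.dual = R := by
  simp [AtomicRule.dual, Function.comp_def]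

@[simp] lemma Base.dual_dual (B : Base) : B.dual.dual = B := by
  simp [Base.dual, Set.image_image]

lemma Base.dual_mono {B C : Base} (h : B ⊆ C) : B.dual ⊆ C.dual :=
  Set.image_mono h

lemma Base.forall_dual_subset {B : Base} {P : Base → Prop} :
    (∀ C, B.dual ⊆ C → P C) ↔ ∀ C, B ⊆ C → P C.dual := by
  refine ⟨fun h C hC => h C.dual (Base.dual_mono hC), fun h C hC => ?_⟩
  simpa using h C.dual (by simpa using Base.dual_mono hC)

lemma AtDeriv.dual {B : Base} {s : Sign} {Γ Δ : Set ℕ} {p : ℕ}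
    (h : AtDeriv B s Γ Δ p) : AtDeriv B.dual s.dual Δ Γ p := by
  induction h with
  | hypPos h => exact .hypNeg h
  | hypNeg h => exact .hypPos h
  | @app Γ Δ R hR _ ih =>
    refine AtDeriv.app (R := R.dual) (Set.mem_image_of_mem _ hR) ?_
    simp only [AtomicRule.dual, List.mem_map]
    rintro _ ⟨pr, hpr, rfl⟩
    exact ih pr hpr

lemma atDeriv_iff_dual {B : Base} {s : Sign} {p : ℕ} :
    AtDeriv B s ∅ ∅ p ↔ AtDeriv B.dual s.dual ∅ ∅ p :=
  ⟨AtDeriv.dual, fun h => by simpa using h.dual⟩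

/-- The elimination clause shared by `⊩⁺ φ ∨ ψ` and `⊩⁻ φ ∧ ψ`. -/
def CaseElim (P Q : Base → Prop) (C : Base) (t : Sign) (p : ℕ) : Prop :=
  ((∀ D, C ⊆ D → P D → AtDeriv D t ∅ ∅ p) ∧ (∀ D, C ⊆ D → Q D → AtDeriv D t ∅ ∅ p)) →
    AtDeriv C t ∅ ∅ p

lemma supp_or_pos_iff {φ ψ : Form} {B : Base} :
    Supp (φ.or ψ) B .pos ↔ ∀ C, B ⊆ C → ∀ p,
      CaseElim (Supp φ · .pos) (Supp ψ · .pos) C .pos p ∧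
      CaseElim (Supp φ · .pos) (Supp ψ · .pos) C .neg p :=
  Iff.rfl

lemma supp_and_neg_iff {φ ψ : Form} {B : Base} :
    Supp (φ.and ψ) B .neg ↔ ∀ C, B ⊆ C → ∀ p,
      CaseElim (Supp φ · .neg) (Supp ψ · .neg) C .pos p ∧
      CaseElim (Supp φ · .neg) (Supp ψ · .neg) C .neg p :=
  Iff.rfl

section CaseElim

variable {P Q P' Q' : Base → Prop}

lemma caseElim_iff_dual (hP : ∀ D, P D ↔ P' D.dual) (hQ : ∀ D, Q D ↔ Q' D.dual)
    {C : Base} {t : Sign} {p : ℕ} :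
    CaseElim P Q C t p ↔ CaseElim P' Q' C.dual t.dual p := by
  simp only [CaseElim, Base.forall_dual_subset, ← hP, ← hQ, ← atDeriv_iff_dual]

lemma forall_caseElim_iff_dual (hP : ∀ D, P D ↔ P' D.dual) (hQ : ∀ D, Q D ↔ Q' D.dual)
    {B : Base} :
    (∀ C, B ⊆ C → ∀ p, CaseElim P Q C .pos p ∧ CaseElim P Q C .neg p) ↔
      ∀ C, B.dual ⊆ C → ∀ p, CaseElim P' Q' C .pos p ∧ CaseElim P' Q' C .neg p := by
  rw [Base.forall_dual_subset]
  refine forall₂_congr fun C _ => forall_congr' fun p => ?_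
  rw [caseElim_iff_dual hP hQ, caseElim_iff_dual (t := .neg) hP hQ, and_comm]
  rfl

end CaseElim

lemma forall_atDeriv_pos_and_neg_iff_dual {B : Base} :
    (∀ p, AtDeriv B .pos ∅ ∅ p ∧ AtDeriv B .neg ∅ ∅ p) ↔
      ∀ p, AtDeriv B.dual .pos ∅ ∅ p ∧ AtDeriv B.dual .neg ∅ ∅ p :=
  forall_congr' fun _ => (and_congr atDeriv_iff_dual atDeriv_iff_dual).trans and_comm

lemma supp_iff_dual (χ : Form) (B : Base) (s : Sign) :
    Supp χ B s ↔ Supp χ.dual B.dual s.dual := by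
  induction χ generalizing B s with
  | atom p => exact atDeriv_iff_dual
  | bot =>
    cases s
    · exact forall_atDeriv_pos_and_neg_iff_dual
    · exact Iff.rfl
  | top =>
    cases s
    · exact Iff.rfl
    · exact forall_atDeriv_pos_and_neg_iff_dual
  | and φ ψ ihφ ihψ =>
    cases s
    · exact and_congr (ihφ B .pos) (ihψ B .pos)
    · exact supp_and_neg_iff.trans <| (forall_caseElim_iff_dual (fun D => ihφ D .neg)
        (fun D => ihψ D .neg)).trans supp_or_pos_iff.symm
  | or φ ψ ihφ ihψ =>
    cases s
    · exact supp_or_pos_iff.trans <| (forall_caseElim_iff_dual (fun D => ihφ D .pos)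
        (fun D => ihψ D .pos)).trans supp_and_neg_iff.symm
    · exact and_congr (ihφ B .neg) (ihψ B .neg)
  | imp φ ψ ihφ ihψ =>
    cases s
    · show (∀ C, B ⊆ C → _) ↔ ∀ C, B.dual ⊆ C → _
      rw [Base.forall_dual_subset]
      exact forall₂_congr fun C _ => imp_congr (ihφ C .pos) (ihψ C .pos)
    · exact (and_congr (ihφ B .pos) (ihψ B .neg)).trans and_comm
  | coimp φ ψ ihφ ihψ =>
    cases s
    · exact (and_congr (ihφ B .pos) (ihψ B .neg)).trans and_comm
    · show (∀ C, B ⊆ C → _) ↔ ∀ C, B.dual ⊆ C → _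
      rw [Base.forall_dual_subset]
      exact forall₂_congr fun C _ => imp_congr (ihψ C .neg) (ihφ C .neg)

theorem weak_bilateral_semantic_harmony (B : Base) (χ : Form) (s : Sign) :
    Supp χ B s ↔ Supp (Form.dual χ) (Base.dual B) (Sign.dual s) :=
  supp_iff_dual χ B s
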